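/- In the Newcomb-with-precommitment environment with ε = 0.01, the two-step values from the empty history of the four policies — signing one-boxer (sign then B₁), signing two-boxer (sign then B₂), refusing one-boxer (not sign then B₁), refusing two-boxer (not sign then B₂) — are: action-evidential and policy-evidential values both equal to 700000, 699000, 990000, 11000 respectively, and causal values 700000, 699000, 500000, 501000 respectively. Hence the refusing one-boxer uniquely maximizes both evidential values (SAEDT and SPEDT refuse the contract and one-box), while the signing one-boxer uniquely maximizes the causal value (SCDT signs the contract and one-boxes). -/

import Mathlib

/-! # A framework for physicalistic sequential decision making

Following Everitt, Leike, Hutter, "Sequential Extensions of Causal and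
Evidential Decision Theory".

An environment model `μ` over hidden states `S`, actions `A`, percepts `E`
with lifetime `m` is given in causally factored form
`μ(s, æ_{1:m}) = μ(s) ∏_i μ(a_i | s, æ_{<i}) μ(e_i | s, æ_{<i} a_i)`.
Histories are lists of action-percept pairs. -/

noncomputable section

variable {S A E : Type*}

/-- The product `∏ μ(a_i | s, æ_{<i}) μ(e_i | s, æ_{<i}a_i)` of the factors along the
continuation `rest` of the history-prefix `pre`. -/
def wSuf (pa : S → List (A × E) → A → ℝ) (pe : S → List (A × E) → A → E → ℝ)
    (s : S) : List (A × E) → List (A × E) → ℝ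
  | _, [] => 1
  | pre, (a, e) :: rest => pa s pre a * pe s pre a e * wSuf pa pe s (pre ++ [(a, e)]) rest

/-- A physicalistic environment model with lifetime `m`: a prior pmf on the hidden state,
together with conditional pmfs for the action and the percept at every time step
(i.e. after every history of length `< m`), which is action-positive. -/
structure Env (S A E : Type*) [Fintype S] [Fintype A] [Fintype E] (m : ℕ) where
  /-- the prior `μ(s)` over the hidden state -/
  prior : S → ℝ
  /-- the action factor `μ(a_t | s, æ_{<t})` -/
  pa : S → List (A × E) → A → ℝ
  /-- the percept factor `μ(e_t | s, æ_{<t}a_t)` -/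
  pe : S → List (A × E) → A → E → ℝ
  prior_nonneg : ∀ s, 0 ≤ prior s
  prior_sum : ∑ s, prior s = 1
  pa_nonneg : ∀ s h a, 0 ≤ pa s h a
  pa_sum : ∀ s (h : List (A × E)), h.length < m → ∑ a, pa s h a = 1
  pe_nonneg : ∀ s h a e, 0 ≤ pe s h a e
  pe_sum : ∀ s (h : List (A × E)) (a : A), h.length < m → ∑ e, pe s h a e = 1
  /-- action-positivity: `μ(æ_{<t} | s) > 0` implies `μ(a_t | s, æ_{<t}) > 0` -/
  action_pos : ∀ s (h : List (A × E)) (a : A), h.length < m →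
    0 < wSuf pa pe s [] h → 0 < pa s h a

variable [Fintype S] [Fintype A] [Fintype E] {m : ℕ}

/-- Event: the trajectory `τ = æ_{1:m}` extends the history `h = æ_{<t}`. -/
def ExtendsH (h : List (A × E)) (τ : Fin m → A × E) : Prop :=
  (List.ofFn τ).take h.length = h

/-- Event: the actions of the trajectory `τ` from (0-based) time `t0` on follow
the deterministic policy `π`. -/
def FollowsFrom (π : List (A × E) → A) (t0 : ℕ) (τ : Fin m → A × E) : Prop :=
  ∀ i : Fin m, t0 ≤ (i : ℕ) → (τ i).1 = π ((List.ofFn τ).take (i : ℕ))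

/-- Event: the action at (0-based) time `k` is `a`. -/
def ActAt (k : ℕ) (a : A) (τ : Fin m → A × E) : Prop :=
  ∀ hk : k < m, (τ ⟨k, hk⟩).1 = a

/-- Event: the percept at (0-based) time `k` is `e`. -/
def PerAt (k : ℕ) (e : E) (τ : Fin m → A × E) : Prop :=
  ∀ hk : k < m, (τ ⟨k, hk⟩).2 = e

namespace Env

/-- The joint probability `μ(s, æ_{<t})`, given directly by the causal factorization. -/
def hw (μ : Env S A E m) (s : S) (h : List (A × E)) : ℝ :=
  μ.prior s * wSuf μ.pa μ.pe s [] h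

/-- The marginal probability `μ(æ_{<t})` of a history. -/
def probH (μ : Env S A E m) (h : List (A × E)) : ℝ := ∑ s, μ.hw s h

/-- The probability `μ(æ_{<t}a_t)` of a history followed by an action. -/
def probHA (μ : Env S A E m) (h : List (A × E)) (a : A) : ℝ :=
  ∑ s, μ.hw s h * μ.pa s h a

/-- The action-evidential conditional `μ(e_t | æ_{<t}a_t)`. -/
def condE (μ : Env S A E m) (h : List (A × E)) (a : A) (e : E) : ℝ :=
  μ.probH (h ++ [(a, e)]) / μ.probHA h a

/-- The posterior `μ(s | æ_{<t})` over the hidden state. -/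
def condS (μ : Env S A E m) (s : S) (h : List (A × E)) : ℝ :=
  μ.hw s h / μ.probH h

/-- The posterior `μ(s | æ_{<t}a_t)` over the hidden state, also conditioning on `a_t`. -/
def condSA (μ : Env S A E m) (s : S) (h : List (A × E)) (a : A) : ℝ :=
  μ.hw s h * μ.pa s h a / μ.probHA h a

/-- The conditional `μ(e_t | s, æ_{<t}a_t)` given the hidden state. -/
def condESA (μ : Env S A E m) (s : S) (h : List (A × E)) (a : A) (e : E) : ℝ :=
  μ.hw s (h ++ [(a, e)]) / (μ.hw s h * μ.pa s h a)

/-! ## Causal interventions -/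

/-- The intervened joint `μ(s, æ_{<t}, e_t | do(a_t := b))`: the action factor at time `t`
is deleted and `a_t` is substituted by `b`. -/
def doJoint (μ : Env S A E m) (s : S) (h : List (A × E)) (b : A) (e : E) : ℝ :=
  μ.hw s h * μ.pe s h b e

/-- `μ(æ_{<t}, e_t | do(a_t := b))`, marginalizing the hidden state. -/
def doNum (μ : Env S A E m) (h : List (A × E)) (b : A) (e : E) : ℝ :=
  ∑ s, μ.doJoint s h b e

/-- `μ(æ_{<t} | do(a_t := b))`, marginalizing the hidden state and the percept `e_t`. -/
def doDen (μ : Env S A E m) (h : List (A × E)) (b : A) : ℝ :=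
  ∑ e, μ.doNum h b e

/-- The causal conditional `μ(e_t | æ_{<t}, do(a_t := b))`. -/
def condDo (μ : Env S A E m) (h : List (A × E)) (b : A) (e : E) : ℝ :=
  μ.doNum h b e / μ.doDen h b

/-- Product of the percept factors along the percepts `es`, all action factors being
deleted and the actions substituted according to the policy `π`:
the intervened conditional `μ(e_{t:k} | s, æ_{<t}, do(a_t := π(æ_{<t}), …))`. -/
def doPE (μ : Env S A E m) (π : List (A × E) → A) (s : S) :
    List (A × E) → List E → ℝ
  | _, [] => 1
  | h, e :: es => μ.pe s h (π h) e * μ.doPE π s (h ++ [(π h, e)]) es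

/-- `μ(æ_{<t}, e_{t:k} | do(a_t := π(æ_{<t}), …, a_m := π(æ_{<m})))` where the percepts
`e_{t:k}` are given by the list `es`. -/
def doPolNum (μ : Env S A E m) (π : List (A × E) → A) (h : List (A × E))
    (es : List E) : ℝ :=
  ∑ s, μ.hw s h * μ.doPE π s h es

/-- `μ(æ_{<t} | do(a_t := π(æ_{<t}), …, a_m := π(æ_{<m})))`, marginalizing all the
intervened percepts `e_{t:m}`. -/
def doPolDen (μ : Env S A E m) (π : List (A × E) → A) (h : List (A × E)) : ℝ :=
  ∑ es : Fin (m - h.length) → E, μ.doPolNum π h (List.ofFn es)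

/-! ## Probabilities of trajectory events -/

open Classical in
/-- The probability of an event `Q` over full trajectories `æ_{1:m}`. -/
def evP (μ : Env S A E m) (Q : (Fin m → A × E) → Prop) : ℝ :=
  ∑ τ : Fin m → A × E, if Q τ then μ.probH (List.ofFn τ) else 0

open Classical in
/-- The joint probability of the hidden state `s` and an event `Q` over full
trajectories `æ_{1:m}`. -/
def evPS (μ : Env S A E m) (s : S) (Q : (Fin m → A × E) → Prop) : ℝ :=
  ∑ τ : Fin m → A × E, if Q τ then μ.hw s (List.ofFn τ) else 0

/-- The policy-evidential conditional `μ(e_t | æ_{<t}, π_{t:m})`, conditioning on the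
event that the history extends `æ_{<t}` and the actions from time `t` to `m` follow `π`. -/
def condPev (μ : Env S A E m) (π : List (A × E) → A) (h : List (A × E)) (e : E) : ℝ :=
  μ.evP (fun τ => ExtendsH h τ ∧ FollowsFrom π h.length τ ∧ PerAt h.length e τ) /
    μ.evP (fun τ => ExtendsH h τ ∧ FollowsFrom π h.length τ)

/-- The posterior `μ(s | æ_{<t}, π_{t:m})` over the hidden state given the policy event. -/
def condSPev (μ : Env S A E m) (π : List (A × E) → A) (s : S) (h : List (A × E)) : ℝ :=
  μ.evPS s (fun τ => ExtendsH h τ ∧ FollowsFrom π h.length τ) /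
    μ.evP (fun τ => ExtendsH h τ ∧ FollowsFrom π h.length τ)

/-- The conditional `μ(e_t | s, æ_{<t}, π_{t:m})` given the hidden state and the
policy event. -/
def condESPev (μ : Env S A E m) (π : List (A × E) → A) (s : S) (h : List (A × E))
    (e : E) : ℝ :=
  μ.evPS s (fun τ => ExtendsH h τ ∧ FollowsFrom π h.length τ ∧ PerAt h.length e τ) /
    μ.evPS s (fun τ => ExtendsH h τ ∧ FollowsFrom π h.length τ)

/-- The conditional `μ(e_t | æ_{<t}a_t, π_{t+1:m})` used in the recursive definition of
the policy-evidential value. -/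
def condPevA (μ : Env S A E m) (π : List (A × E) → A) (h : List (A × E)) (a : A)
    (e : E) : ℝ :=
  μ.evP (fun τ => ExtendsH (h ++ [(a, e)]) τ ∧ FollowsFrom π (h.length + 1) τ) /
    μ.evP (fun τ => ExtendsH h τ ∧ ActAt h.length a τ ∧ FollowsFrom π (h.length + 1) τ)

/-! ## Value functions

The recursions are driven by the fuel `n`, the number of remaining time steps: the
value of a history `æ_{<t}` (for `t ≤ m + 1`) or of `æ_{<t}a_t` (for `t ≤ m`) within
lifetime `m` uses fuel `n = m - (t - 1)`, and the value is `0` for `t > m`. -/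

/-- The action-evidential value `V^{aev,π}_{μ}(æ_{<t}a_t)` (with `n = m - t + 1`):
`V^{aev,π}(æ_{<t}a_t) = ∑_{e_t} μ(e_t | æ_{<t}a_t) (u(e_t) + V^{aev,π}(æ_{<t}a_te_t))`. -/
def VaevA (μ : Env S A E m) (u : E → ℝ) (π : List (A × E) → A) :
    ℕ → List (A × E) → A → ℝ
  | 0, _, _ => 0
  | n + 1, h, a =>
    ∑ e, μ.condE h a e * (u e + μ.VaevA u π n (h ++ [(a, e)]) (π (h ++ [(a, e)])))

/-- The action-evidential value of a history, `V^{aev,π}(æ_{<t}) = V^{aev,π}(æ_{<t}π(æ_{<t}))`. -/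
def Vaev (μ : Env S A E m) (u : E → ℝ) (π : List (A × E) → A) (n : ℕ)
    (h : List (A × E)) : ℝ :=
  μ.VaevA u π n h (π h)

/-- The policy-evidential value `V^{pev,π}_{μ}(æ_{<t}a_t)` (with `n = m - t + 1`):
`V^{pev,π}(æ_{<t}a_t) = ∑_{e_t} μ(e_t | æ_{<t}a_t, π_{t+1:m}) (u(e_t) + V^{pev,π}(æ_{<t}a_te_t))`. -/
def VpevA (μ : Env S A E m) (u : E → ℝ) (π : List (A × E) → A) :
    ℕ → List (A × E) → A → ℝ
  | 0, _, _ => 0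
  | n + 1, h, a =>
    ∑ e, μ.condPevA π h a e * (u e + μ.VpevA u π n (h ++ [(a, e)]) (π (h ++ [(a, e)])))

/-- The policy-evidential value of a history. -/
def Vpev (μ : Env S A E m) (u : E → ℝ) (π : List (A × E) → A) (n : ℕ)
    (h : List (A × E)) : ℝ :=
  μ.VpevA u π n h (π h)

/-- The causal value `V^{cau,π}_{μ}(æ_{<t}a_t)` (with `n = m - t + 1`):
`V^{cau,π}(æ_{<t}a_t) = ∑_{e_t} μ(e_t | æ_{<t}, do(a_t)) (u(e_t) + V^{cau,π}(æ_{<t}a_te_t))`. -/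
def VcauA (μ : Env S A E m) (u : E → ℝ) (π : List (A × E) → A) :
    ℕ → List (A × E) → A → ℝ
  | 0, _, _ => 0
  | n + 1, h, a =>
    ∑ e, μ.condDo h a e * (u e + μ.VcauA u π n (h ++ [(a, e)]) (π (h ++ [(a, e)])))

/-- The causal value of a history. -/
def Vcau (μ : Env S A E m) (u : E → ℝ) (π : List (A × E) → A) (n : ℕ)
    (h : List (A × E)) : ℝ :=
  μ.VcauA u π n h (π h)

/-! ## Products of one-step conditionals, for the iterative forms -/

/-- `∏_{i=t}^{k} μ(e_i | æ_{<i}a_i)` with `a_i := π(æ_{<i})`, the percepts `e_{t:k}`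
being given by the list `es`. -/
def prodAev (μ : Env S A E m) (π : List (A × E) → A) : List (A × E) → List E → ℝ
  | _, [] => 1
  | h, e :: es => μ.condE h (π h) e * μ.prodAev π (h ++ [(π h, e)]) es

/-- `∏_{i=t}^{k} μ(e_i | æ_{<i}, π_{i:m})`. -/
def prodPev (μ : Env S A E m) (π : List (A × E) → A) : List (A × E) → List E → ℝ
  | _, [] => 1
  | h, e :: es => μ.condPev π h e * μ.prodPev π (h ++ [(π h, e)]) es

/-- `∏_{i=t}^{k} μ(e_i | æ_{<i}, do(a_i))` with `a_i := π(æ_{<i})`. -/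
def prodCau (μ : Env S A E m) (π : List (A × E) → A) : List (A × E) → List E → ℝ
  | _, [] => 1
  | h, e :: es => μ.condDo h (π h) e * μ.prodCau π (h ++ [(π h, e)]) es

/-- `∏_{i=t}^{k} ∑_{s} μ(s | æ_{<i}) μ(e_i | s, æ_{<i}a_i)` with `a_i := π(æ_{<i})`. -/
def prodCauX (μ : Env S A E m) (π : List (A × E) → A) : List (A × E) → List E → ℝ
  | _, [] => 1
  | h, e :: es =>
    (∑ s, μ.condS s h * μ.condESA s h (π h) e) * μ.prodCauX π (h ++ [(π h, e)]) es

end Env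

end

/-! ## The Newcomb-with-precommitment environment (lifetime m = 2, ε = 0.01)

Hidden states `E` (opaque box empty) / `F` (full), prior 1/2 each. At step 1 the agent
signs a binding contract (`S := B₁`, percept `C`, utility −300000) or not (`N := B₂`,
percept `p0`, utility 0), each with probability 1/2. At step 2 the agent one-boxes
(`B₁`) or two-boxes (`B₂`). If the agent signed, the prediction is updated to
one-boxing, `μ(B₁ | s, SC) = 0.99` for both states, and the final utility is 1000000
for `B₁` and 999000 for `B₂` (1001000 minus the 2000 contract penalty) regardless of
the state. If the agent did not sign, `μ(B₁ | F, N0) = 0.99` and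
`μ(B₁ | E, N0) = 0.01`, with final utilities 0 for `(E, B₁)`, 1000 for `(E, B₂)`,
1000000 for `(F, B₁)` and 1001000 for `(F, B₂)`. -/

/-- Hidden states: opaque box empty (`E`) or full (`F`). -/
inductive PSt | E | F
  deriving DecidableEq

instance : Fintype PSt :=
  ⟨{PSt.E, PSt.F}, fun x => by cases x <;> simp⟩

/-- Actions: `B₁` (step 1: sign the contract; step 2: one-box), `B₂` (step 1: refuse;
step 2: two-box). -/
inductive PAct | B₁ | B₂
  deriving DecidableEq

instance : Fintype PAct :=
  ⟨{PAct.B₁, PAct.B₂}, fun x => by cases x <;> simp⟩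

/-- Percepts: contract signed (`C`), nothing (`p0`), and the payoffs. -/
inductive PPer | C | p0 | O0 | OT | OM | OMT | OMm
  deriving DecidableEq

instance : Fintype PPer :=
  ⟨{PPer.C, PPer.p0, PPer.O0, PPer.OT, PPer.OM, PPer.OMT, PPer.OMm},
    fun x => by cases x <;> simp⟩

/-- The action factors `μ(a_t | s, æ_{<t})`: uniform at step 1; after signing, both
states predict one-boxing with probability 0.99; after refusing, the prediction has
accuracy 0.99. -/
noncomputable def npPa : PSt → List (PAct × PPer) → PAct → ℝ
  | _, [], _ => 1 / 2
  | _, (PAct.B₁, _) :: _, PAct.B₁ => 0.99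
  | _, (PAct.B₁, _) :: _, PAct.B₂ => 0.01
  | PSt.F, _, PAct.B₁ => 0.99
  | PSt.F, _, PAct.B₂ => 0.01
  | PSt.E, _, PAct.B₁ => 0.01
  | PSt.E, _, PAct.B₂ => 0.99

/-- The percept factors `μ(e_t | s, æ_{<t}a_t)`. -/
noncomputable def npPe : PSt → List (PAct × PPer) → PAct → PPer → ℝ
  | _, [], PAct.B₁, PPer.C => 1
  | _, [], PAct.B₁, _ => 0
  | _, [], PAct.B₂, PPer.p0 => 1
  | _, [], PAct.B₂, _ => 0
  | _, (PAct.B₁, _) :: _, PAct.B₁, PPer.OM => 1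
  | _, (PAct.B₁, _) :: _, PAct.B₁, _ => 0
  | _, (PAct.B₁, _) :: _, PAct.B₂, PPer.OMm => 1
  | _, (PAct.B₁, _) :: _, PAct.B₂, _ => 0
  | PSt.E, _, PAct.B₁, PPer.O0 => 1
  | PSt.E, _, PAct.B₂, PPer.OT => 1
  | PSt.F, _, PAct.B₁, PPer.OM => 1
  | PSt.F, _, PAct.B₂, PPer.OMT => 1
  | _, _, _, _ => 0

/-- The Newcomb-with-precommitment environment model, lifetime `m = 2`. -/
noncomputable def npEnv : Env PSt PAct PPer 2 where
  prior := fun _ => 1 / 2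
  pa := npPa
  pe := npPe
  prior_nonneg := by intro s; norm_num
  prior_sum := by
    rw [show (Finset.univ : Finset PSt) = {PSt.E, PSt.F} by decide,
      Finset.sum_insert (by decide), Finset.sum_singleton]
    norm_num
  pa_nonneg := by intro s h a; unfold npPa; split <;> norm_num
  pa_sum := by
    intro s h hlen
    rw [show (Finset.univ : Finset PAct) = {PAct.B₁, PAct.B₂} by decide,
      Finset.sum_insert (by decide), Finset.sum_singleton]
    rcases h with _ | ⟨⟨a1, e1⟩, _ | ⟨p, t⟩⟩
    · cases s <;> norm_num [npPa]
    · cases s <;> cases a1 <;> cases e1 <;> norm_num [npPa]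
    · simp only [List.length_cons] at hlen; omega
  pe_nonneg := by intro s h a e; unfold npPe; split <;> norm_num
  pe_sum := by
    intro s h a hlen
    rw [show (Finset.univ : Finset PPer) =
        {PPer.C, PPer.p0, PPer.O0, PPer.OT, PPer.OM, PPer.OMT, PPer.OMm} by decide,
      Finset.sum_insert (by decide), Finset.sum_insert (by decide),
      Finset.sum_insert (by decide), Finset.sum_insert (by decide),
      Finset.sum_insert (by decide), Finset.sum_insert (by decide),
      Finset.sum_singleton]
    rcases h with _ | ⟨⟨a1, e1⟩, _ | ⟨p, t⟩⟩
    · cases s <;> cases a <;> norm_num [npPe]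
    · cases s <;> cases a <;> cases a1 <;> cases e1 <;> norm_num [npPe]
    · simp only [List.length_cons] at hlen; omega
  action_pos := by
    intro s h a hlen hpos
    unfold npPa; split <;> norm_num

/-- The utility function of the Newcomb-with-precommitment problem. -/
noncomputable def npU : PPer → ℝ
  | PPer.C => -300000
  | PPer.p0 => 0
  | PPer.O0 => 0
  | PPer.OT => 1000
  | PPer.OM => 1000000
  | PPer.OMT => 1001000
  | PPer.OMm => 999000

/-- The signing one-boxer: sign the contract, then one-box. -/
def npS1 : List (PAct × PPer) → PAct := fun _ => PAct.B₁

/-- The signing two-boxer: sign the contract, then two-box. -/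
def npS2 : List (PAct × PPer) → PAct
  | [] => PAct.B₁
  | _ => PAct.B₂

/-- The refusing one-boxer: don't sign, then one-box. -/
def npR1 : List (PAct × PPer) → PAct
  | [] => PAct.B₂
  | _ => PAct.B₁

/-- The refusing two-boxer: don't sign, then two-box. -/
def npR2 : List (PAct × PPer) → PAct := fun _ => PAct.B₂

/-! Signing makes the step-2 payoff independent of the hidden state, so all three values of a
signing policy are `−300000` plus the sure step-2 payoff. After refusing, the evidential
conditionals treat the agent's own step-2 action as 99%-reliable evidence about the box,
`μ(F | N0, B₁) = 0.99`, which gives `0.99 · 10⁶ = 990000` and `0.01 · 10⁶ + 1000 = 11000`;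
the causal conditional cuts the action off from the prediction and keeps the prior `1/2` on the
box, which gives `500000` and `501000`. The policy-evidential values coincide with the
action-evidential ones: at the last step the two conditionals agree for every environment, and
at the first step the percept is determined by the action. -/

theorem Fintype.sum_ite_fst_eq {A E M : Type*} [Fintype A] [Fintype E] [AddCommMonoid M]
    (b : A) [DecidablePred fun q : A × E => q.1 = b] (f : A × E → M) :
    (∑ q : A × E, if q.1 = b then f q else 0) = ∑ e, f (b, e) := by
  rw [Fintype.sum_prod_type, Finset.sum_comm]
  refine Finset.sum_congr rfl fun e _ => ?_
  rw [Fintype.sum_eq_single b fun x hx => if_neg hx, if_pos rfl]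

theorem wSuf_append_singleton {S A E : Type*} (pa : S → List (A × E) → A → ℝ)
    (pe : S → List (A × E) → A → E → ℝ) (s : S) (pre h : List (A × E)) (a : A) (e : E) :
    wSuf pa pe s pre (h ++ [(a, e)]) =
      wSuf pa pe s pre h * pa s (pre ++ h) a * pe s (pre ++ h) a e := by
  induction h generalizing pre with
  | nil => simp [wSuf]
  | cons x h ih =>
    simp only [List.cons_append, wSuf, ih, List.append_assoc, List.nil_append]
    ring

section Trajectory

variable {A E : Type*} {m : ℕ}

theorem extendsH_nil (τ : Fin m → A × E) : ExtendsH [] τ := by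
  simp [ExtendsH]

theorem followsFrom_of_le (π : List (A × E) → A) {t : ℕ} (ht : m ≤ t) (τ : Fin m → A × E) :
    FollowsFrom π t τ :=
  fun i hi => absurd (i.isLt.trans_le (ht.trans hi)) (lt_irrefl _)

variable (p q : A × E)

theorem extendsH_singleton_pair (x : A × E) : ExtendsH [x] ![p, q] ↔ p = x := by
  simp [ExtendsH, List.ofFn_succ]

theorem extendsH_pair_pair (x y : A × E) : ExtendsH [x, y] ![p, q] ↔ p = x ∧ q = y := by
  simp [ExtendsH, List.ofFn_succ]

theorem followsFrom_one_pair (π : List (A × E) → A) :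
    FollowsFrom π 1 ![p, q] ↔ q.1 = π [p] := by
  simp [FollowsFrom, List.ofFn_succ, Fin.forall_fin_two]

theorem actAt_zero_pair (a : A) : ActAt 0 a ![p, q] ↔ p.1 = a := by
  simp [ActAt]

theorem actAt_one_pair (a : A) : ActAt 1 a ![p, q] ↔ q.1 = a := by
  simp [ActAt]

end Trajectory

namespace Env

variable {S A E : Type*} [Fintype S] [Fintype A] [Fintype E] {m : ℕ}

theorem hw_append_singleton (μ : Env S A E m) (s : S) (h : List (A × E)) (a : A) (e : E) :
    μ.hw s (h ++ [(a, e)]) = μ.hw s h * μ.pa s h a * μ.pe s h a e := by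
  simp only [hw, wSuf_append_singleton, List.nil_append]
  ring

theorem sum_probH_append_singleton (μ : Env S A E m) {h : List (A × E)} (hh : h.length < m)
    (a : A) : ∑ e, μ.probH (h ++ [(a, e)]) = μ.probHA h a := by
  simp only [probH, probHA, hw_append_singleton]
  rw [Finset.sum_comm]
  simp only [← Finset.mul_sum, μ.pe_sum _ _ _ hh, mul_one]

variable (μ : Env S A E 2) (π : List (A × E) → A)

open Classical in
theorem evP_eq_sum_pair (Q : (Fin 2 → A × E) → Prop) :
    μ.evP Q = ∑ p, ∑ q, if Q ![p, q] then μ.probH [p, q] else 0 := by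
  rw [evP, ← (finTwoArrowEquiv (A × E)).symm.sum_comp, Fintype.sum_prod_type]
  simp [List.ofFn_succ]

theorem condPevA_nil (a : A) (e : E) :
    μ.condPevA π [] a e =
      μ.probHA [(a, e)] (π [(a, e)]) / ∑ e₀, μ.probHA [(a, e₀)] (π [(a, e₀)]) := by
  classical
  have marginal (p : A × E) (b : A) : ∑ e', μ.probH [p, (b, e')] = μ.probHA [p] b :=
    μ.sum_probH_append_singleton (h := [p]) (by simp) b
  simp only [condPevA, evP_eq_sum_pair, List.length_nil, List.nil_append, zero_add, extendsH_nil,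
    extendsH_singleton_pair, followsFrom_one_pair, actAt_zero_pair, true_and]
  simp only [ite_and, Finset.sum_ite_irrel, Finset.sum_const_zero, Finset.sum_ite_eq',
    Finset.mem_univ, if_true, Fintype.sum_ite_fst_eq, marginal]

theorem condPevA_singleton (p : A × E) (a : A) (e : E) :
    μ.condPevA π [p] a e = μ.condE [p] a e := by
  classical
  have marginal : ∑ e', μ.probH [p, (a, e')] = μ.probHA [p] a :=
    μ.sum_probH_append_singleton (h := [p]) (by simp) a
  simp only [condPevA, evP_eq_sum_pair, List.length_singleton, List.cons_append,
    List.nil_append, followsFrom_of_le, extendsH_singleton_pair, extendsH_pair_pair,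
    actAt_one_pair, le_refl, and_true]
  simp only [ite_and, Finset.sum_ite_irrel, Finset.sum_const_zero, Finset.sum_ite_eq',
    Finset.mem_univ, if_true, Fintype.sum_ite_fst_eq, marginal, condE]
  rfl

end Env

theorem PSt.sum_univ {M : Type*} [AddCommMonoid M] (f : PSt → M) :
    ∑ s, f s = f .E + f .F := by
  rw [show (Finset.univ : Finset PSt) = {.E, .F} from rfl, Finset.sum_pair (by decide)]

theorem PPer.sum_univ {M : Type*} [AddCommMonoid M] (f : PPer → M) :
    ∑ e, f e = f .C + f .p0 + f .O0 + f .OT + f .OM + f .OMT + f .OMm := by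
  rw [show (Finset.univ : Finset PPer) = {.C, .p0, .O0, .OT, .OM, .OMT, .OMm} from rfl]
  simp only [Finset.sum_insert, Finset.mem_insert, Finset.mem_singleton, reduceCtorEq, or_self,
    not_false_eq_true, Finset.sum_singleton]
  abel

theorem npEnv_Vaev :
    npEnv.Vaev npU npS1 2 [] = 700000 ∧ npEnv.Vaev npU npS2 2 [] = 699000 ∧
      npEnv.Vaev npU npR1 2 [] = 990000 ∧ npEnv.Vaev npU npR2 2 [] = 11000 := by
  refine ⟨?_, ?_, ?_, ?_⟩ <;>
  · simp only [Env.Vaev, Env.VaevA, Env.condE, Env.probH, Env.probHA, Env.hw, wSuf,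
      PSt.sum_univ, PPer.sum_univ, npEnv, npS1, npS2, npR1, npR2, npPa, npPe, npU,
      List.nil_append, List.cons_append]
    norm_num

theorem npEnv_Vpev :
    npEnv.Vpev npU npS1 2 [] = 700000 ∧ npEnv.Vpev npU npS2 2 [] = 699000 ∧
      npEnv.Vpev npU npR1 2 [] = 990000 ∧ npEnv.Vpev npU npR2 2 [] = 11000 := by
  refine ⟨?_, ?_, ?_, ?_⟩ <;>
  · simp only [Env.Vpev, Env.VpevA, Env.condPevA_nil, Env.condPevA_singleton, Env.condE,
      Env.probH, Env.probHA, Env.hw, wSuf, PSt.sum_univ, PPer.sum_univ, npEnv, npS1, npS2, npR1,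
      npR2, npPa, npPe, npU, List.nil_append, List.cons_append]
    norm_num

theorem npEnv_Vcau :
    npEnv.Vcau npU npS1 2 [] = 700000 ∧ npEnv.Vcau npU npS2 2 [] = 699000 ∧
      npEnv.Vcau npU npR1 2 [] = 500000 ∧ npEnv.Vcau npU npR2 2 [] = 501000 := by
  refine ⟨?_, ?_, ?_, ?_⟩ <;>
  · simp only [Env.Vcau, Env.VcauA, Env.condDo, Env.doNum, Env.doDen, Env.doJoint,
      Env.hw, wSuf, PSt.sum_univ, PPer.sum_univ, npEnv, npS1, npS2, npR1, npR2, npPa, npPe, npU,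
      List.nil_append]
    norm_num

/-- **Newcomb with precommitment** (ε = 0.01): from the empty history, the
action-evidential and policy-evidential values of the four policies (signing one-boxer,
signing two-boxer, refusing one-boxer, refusing two-boxer) are both equal to
700000, 699000, 990000, 11000 respectively, and their causal values are
700000, 699000, 500000, 501000. Hence the refusing one-boxer uniquely maximizes both
evidential values (SAEDT and SPEDT refuse the contract and one-box), while the signing
one-boxer uniquely maximizes the causal value (SCDT signs the contract and one-boxes). -/
theorem newcomb_with_precommitment :
    (npEnv.Vaev npU npS1 2 [] = 700000 ∧
     npEnv.Vaev npU npS2 2 [] = 699000 ∧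
     npEnv.Vaev npU npR1 2 [] = 990000 ∧
     npEnv.Vaev npU npR2 2 [] = 11000) ∧
    (npEnv.Vpev npU npS1 2 [] = 700000 ∧
     npEnv.Vpev npU npS2 2 [] = 699000 ∧
     npEnv.Vpev npU npR1 2 [] = 990000 ∧
     npEnv.Vpev npU npR2 2 [] = 11000) ∧
    (npEnv.Vcau npU npS1 2 [] = 700000 ∧
     npEnv.Vcau npU npS2 2 [] = 699000 ∧
     npEnv.Vcau npU npR1 2 [] = 500000 ∧
     npEnv.Vcau npU npR2 2 [] = 501000) ∧
    (npEnv.Vaev npU npS1 2 [] < npEnv.Vaev npU npR1 2 [] ∧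
     npEnv.Vaev npU npS2 2 [] < npEnv.Vaev npU npR1 2 [] ∧
     npEnv.Vaev npU npR2 2 [] < npEnv.Vaev npU npR1 2 []) ∧
    (npEnv.Vpev npU npS1 2 [] < npEnv.Vpev npU npR1 2 [] ∧
     npEnv.Vpev npU npS2 2 [] < npEnv.Vpev npU npR1 2 [] ∧
     npEnv.Vpev npU npR2 2 [] < npEnv.Vpev npU npR1 2 []) ∧
    (npEnv.Vcau npU npS2 2 [] < npEnv.Vcau npU npS1 2 [] ∧
     npEnv.Vcau npU npR1 2 [] < npEnv.Vcau npU npS1 2 [] ∧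
     npEnv.Vcau npU npR2 2 [] < npEnv.Vcau npU npS1 2 []) := by
  obtain ⟨a₁, a₂, a₃, a₄⟩ := npEnv_Vaev
  obtain ⟨p₁, p₂, p₃, p₄⟩ := npEnv_Vpev
  obtain ⟨c₁, c₂, c₃, c₄⟩ := npEnv_Vcau
  rw [a₁, a₂, a₃, a₄, p₁, p₂, p₃, p₄, c₁, c₂, c₃, c₄]
  norm_num
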